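/- Let n ≥ 2 be an integer. Let F : ℝⁿ → ℝⁿ be differentiable everywhere with Jacobian J(x), let x* ∈ ℝⁿ satisfy F(x*) = 0 with J* := J(x*) invertible and c := ‖J*⁻¹‖, and suppose ‖J(x) − J(x*)‖ ≤ M‖x − x*‖ for all x ∈ ℝⁿ, where M > 0. Let x_k ∈ ℝⁿ, B_k ∈ ℝ^{n×n} be generated by the greedy Broyden's method with each B_k invertible. If 48√n c M ‖x₀ − x*‖ + c‖B₀ − J(x₀)‖_F ≤ 1/3, then for all k ≥ 1, ‖x_k − x*‖ ≤ e^k·(1 − 1/n)^{k(k−1)/4}·‖x₀ − x*‖. -/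

import Mathlib

open Matrix

noncomputable def vecNorm {n : ℕ} (u : Fin n → ℝ) : ℝ := Real.sqrt (∑ i, u i ^ 2)

noncomputable def frobNorm {n : ℕ} (M : Matrix (Fin n) (Fin n) ℝ) : ℝ :=
  Real.sqrt (∑ i, ∑ j, M i j ^ 2)

noncomputable def specNorm {n : ℕ} (M : Matrix (Fin n) (Fin n) ℝ) : ℝ :=
  sSup {r : ℝ | ∃ u : Fin n → ℝ, vecNorm u = 1 ∧ r = vecNorm (M.mulVec u)}

noncomputable def broyd {n : ℕ} (B A : Matrix (Fin n) (Fin n) ℝ) (u : Fin n → ℝ) :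
    Matrix (Fin n) (Fin n) ℝ :=
  B + (∑ i, u i ^ 2)⁻¹ • ((A - B) * Matrix.vecMulVec u u)

noncomputable def matCLM {n : ℕ} (M : Matrix (Fin n) (Fin n) ℝ) :
    (Fin n → ℝ) →L[ℝ] (Fin n → ℝ) :=
  LinearMap.toContinuousLinearMap M.mulVecLin

/-!
Write `r k = ‖x k - x*‖`, `σ k = ‖B k - J x*‖_F` and `τ = √(1 - 1/n)`. A quasi-Newton step with
`B k` in place of `J x*` gives `(1 - c σ_k) r_{k+1} ≤ c (σ_k r_k + M r_k²)`. The greedy update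
replaces the largest column of `B k - J (x (k+1))`, which carries at least a `1/n` share of its
squared Frobenius norm, so `σ_{k+1} ≤ τ σ_k + 2 √n M r_{k+1}`. As long as the potential
`c σ_k + 6 √n c M r_k` is at most `1/3`, it shrinks by the factor `τ` and `r_{k+1} ≤ τ^k r_k`;
the initial condition starts this induction, and multiplying the contractions gives
`r_k ≤ τ^(k choose 2) r_0 = (1 - 1/n)^(k(k-1)/4) r_0`.
-/

open WithLp

section Norms

variable {n : ℕ}

lemma vecNorm_eq_norm (u : Fin n → ℝ) :
    vecNorm u = ‖(toLp 2 u : EuclideanSpace ℝ (Fin n))‖ := by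
  simp [vecNorm, EuclideanSpace.norm_eq]

lemma vecNorm_nonneg (u : Fin n → ℝ) : 0 ≤ vecNorm u := Real.sqrt_nonneg _

lemma vecNorm_sub_le (u v : Fin n → ℝ) : vecNorm (u - v) ≤ vecNorm u + vecNorm v := by
  simpa only [vecNorm_eq_norm, toLp_sub] using norm_sub_le _ _

lemma sq_vecNorm (u : Fin n → ℝ) : vecNorm u ^ 2 = ∑ i, u i ^ 2 :=
  Real.sq_sqrt (Finset.sum_nonneg fun _ _ => sq_nonneg _)

lemma specNorm_eq_norm_toEuclideanCLM (A : Matrix (Fin n) (Fin n) ℝ) :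
    specNorm A = ‖toEuclideanCLM (𝕜 := ℝ) A‖ := by
  rw [← ContinuousLinearMap.sSup_sphere_eq_norm, specNorm]
  congr 1
  ext r
  constructor
  · rintro ⟨u, hu, rfl⟩
    exact ⟨toLp 2 u, by simpa [vecNorm_eq_norm] using hu, by simp [vecNorm_eq_norm]⟩
  · rintro ⟨u, hu, rfl⟩
    exact ⟨ofLp u, by simpa [vecNorm_eq_norm] using hu,
      by rw [vecNorm_eq_norm, ← toEuclideanCLM_toLp, toLp_ofLp]⟩

lemma specNorm_nonneg (A : Matrix (Fin n) (Fin n) ℝ) : 0 ≤ specNorm A := by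
  rw [specNorm_eq_norm_toEuclideanCLM]; exact norm_nonneg _

lemma vecNorm_mulVec_le_specNorm (A : Matrix (Fin n) (Fin n) ℝ) (v : Fin n → ℝ) :
    vecNorm (A *ᵥ v) ≤ specNorm A * vecNorm v := by
  simpa [vecNorm_eq_norm, specNorm_eq_norm_toEuclideanCLM] using
    (toEuclideanCLM (𝕜 := ℝ) A).le_opNorm (toLp 2 v)

section
attribute [local instance] Matrix.frobeniusNormedAddCommGroup

lemma frobNorm_eq_norm (A : Matrix (Fin n) (Fin n) ℝ) : frobNorm A = ‖A‖ := by
  simp [frobNorm, Matrix.frobenius_norm_def, Real.sqrt_eq_rpow]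

lemma frobNorm_sub_rev (A B : Matrix (Fin n) (Fin n) ℝ) :
    frobNorm (A - B) = frobNorm (B - A) := by
  simpa only [frobNorm_eq_norm] using norm_sub_rev A B

lemma frobNorm_sub_le (A B C : Matrix (Fin n) (Fin n) ℝ) :
    frobNorm (A - C) ≤ frobNorm (A - B) + frobNorm (B - C) := by
  simpa only [frobNorm_eq_norm] using norm_sub_le_norm_sub_add_norm_sub A B C

end

lemma frobNorm_nonneg (A : Matrix (Fin n) (Fin n) ℝ) : 0 ≤ frobNorm A := Real.sqrt_nonneg _

lemma sq_frobNorm_eq_sum_col (A : Matrix (Fin n) (Fin n) ℝ) :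
    frobNorm A ^ 2 = ∑ j, vecNorm (A.col j) ^ 2 := by
  rw [frobNorm, Real.sq_sqrt (by positivity), Finset.sum_comm]
  simp [sq_vecNorm]

lemma vecNorm_mulVec_le_frobNorm (A : Matrix (Fin n) (Fin n) ℝ) (v : Fin n → ℝ) :
    vecNorm (A *ᵥ v) ≤ frobNorm A * vecNorm v := by
  refine (pow_le_pow_iff_left₀ (vecNorm_nonneg _)
    (mul_nonneg (frobNorm_nonneg A) (vecNorm_nonneg v)) two_ne_zero).1 ?_
  rw [mul_pow, sq_vecNorm, sq_vecNorm, frobNorm, Real.sq_sqrt (by positivity), Finset.sum_mul]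
  exact Finset.sum_le_sum fun i _ => Finset.sum_mul_sq_le_sq_mul_sq Finset.univ (A i) v

lemma vecNorm_single_one (j : Fin n) : vecNorm (Pi.single j 1 : Fin n → ℝ) = 1 := by
  simp [vecNorm_eq_norm]

lemma vecNorm_col_le_specNorm (A : Matrix (Fin n) (Fin n) ℝ) (j : Fin n) :
    vecNorm (A.col j) ≤ specNorm A := by
  have h := vecNorm_mulVec_le_specNorm A (Pi.single j 1)
  rwa [mulVec_single_one, vecNorm_single_one, mul_one] at h

lemma frobNorm_le_sqrt_mul_specNorm (A : Matrix (Fin n) (Fin n) ℝ) :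
    frobNorm A ≤ √n * specNorm A := by
  refine (pow_le_pow_iff_left₀ (frobNorm_nonneg A)
    (mul_nonneg (Real.sqrt_nonneg _) (specNorm_nonneg A)) two_ne_zero).1 ?_
  calc frobNorm A ^ 2 = ∑ j, vecNorm (A.col j) ^ 2 := sq_frobNorm_eq_sum_col A
    _ ≤ ∑ _j : Fin n, specNorm A ^ 2 := Finset.sum_le_sum fun j _ =>
        pow_le_pow_left₀ (vecNorm_nonneg _) (vecNorm_col_le_specNorm A j) 2
    _ = (√n * specNorm A) ^ 2 := by simp [mul_pow]

end Norms

section GreedyUpdate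

variable {n : ℕ}

lemma col_broyd_single_sub (B A : Matrix (Fin n) (Fin n) ℝ) (i j : Fin n) :
    (broyd B A (Pi.single i 1) - A).col j = if j = i then 0 else (B - A).col j := by
  ext p
  by_cases hji : j = i
  · subst hji; simp [broyd, vecMulVec, Matrix.mul_apply, Pi.single_apply]
  · simp [broyd, vecMulVec, Matrix.mul_apply, Pi.single_apply, hji]

lemma sq_frobNorm_broyd_single_sub (B A : Matrix (Fin n) (Fin n) ℝ) (i : Fin n) :
    frobNorm (broyd B A (Pi.single i 1) - A) ^ 2
      = frobNorm (B - A) ^ 2 - vecNorm ((B - A).col i) ^ 2 := by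
  have hcol (j : Fin n) : vecNorm ((broyd B A (Pi.single i 1) - A).col j) ^ 2
      = vecNorm ((B - A).col j) ^ 2 - if j = i then vecNorm ((B - A).col i) ^ 2 else 0 := by
    rw [col_broyd_single_sub]
    split_ifs with hji
    · simp [hji, vecNorm]
    · simp
  simp only [sq_frobNorm_eq_sum_col, hcol, Finset.sum_sub_distrib, Finset.sum_ite_eq',
    Finset.mem_univ, if_true]

def IsGreedyColumn (D : Matrix (Fin n) (Fin n) ℝ) (i : Fin n) : Prop :=
  ∀ j, vecNorm (D *ᵥ Pi.single j 1) ≤ vecNorm (D *ᵥ Pi.single i 1)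

lemma sq_frobNorm_le_mul_sq_vecNorm_col {D : Matrix (Fin n) (Fin n) ℝ} {i : Fin n}
    (hi : IsGreedyColumn D i) : frobNorm D ^ 2 ≤ n * vecNorm (D.col i) ^ 2 := by
  calc frobNorm D ^ 2 = ∑ j, vecNorm (D.col j) ^ 2 := sq_frobNorm_eq_sum_col D
    _ ≤ ∑ _j : Fin n, vecNorm (D.col i) ^ 2 :=
        Finset.sum_le_sum fun j _ => pow_le_pow_left₀ (vecNorm_nonneg _)
          (by simpa only [mulVec_single_one] using hi j) 2
    _ = n * vecNorm (D.col i) ^ 2 := by simp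

lemma frobNorm_broyd_single_sub_le {B A : Matrix (Fin n) (Fin n) ℝ} {i : Fin n}
    (hi : IsGreedyColumn (B - A) i) :
    frobNorm (broyd B A (Pi.single i 1) - A) ≤ √(1 - 1 / n) * frobNorm (B - A) := by
  have hn : (1 : ℝ) ≤ n := by exact_mod_cast Fin.pos i
  have hfrob := sq_frobNorm_le_mul_sq_vecNorm_col hi
  refine (pow_le_pow_iff_left₀ (frobNorm_nonneg _)
    (mul_nonneg (Real.sqrt_nonneg _) (frobNorm_nonneg _)) two_ne_zero).1 ?_
  have hτ : 0 ≤ 1 - 1 / (n : ℝ) := sub_nonneg.2 ((div_le_one (by positivity)).2 hn)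
  have hcol : frobNorm (B - A) ^ 2 / n ≤ vecNorm ((B - A).col i) ^ 2 := by
    rw [div_le_iff₀ (by positivity)]; linarith
  calc frobNorm (broyd B A (Pi.single i 1) - A) ^ 2
      = frobNorm (B - A) ^ 2 - vecNorm ((B - A).col i) ^ 2 :=
        sq_frobNorm_broyd_single_sub B A i
    _ ≤ frobNorm (B - A) ^ 2 - frobNorm (B - A) ^ 2 / n := by linarith
    _ = (√(1 - 1 / n) * frobNorm (B - A)) ^ 2 := by rw [mul_pow, Real.sq_sqrt hτ]; ring

lemma frobNorm_broyd_single_sub_le_add {B A : Matrix (Fin n) (Fin n) ℝ} {i : Fin n}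
    (hi : IsGreedyColumn (B - A) i) (C : Matrix (Fin n) (Fin n) ℝ) :
    frobNorm (broyd B A (Pi.single i 1) - C)
      ≤ √(1 - 1 / n) * frobNorm (B - C) + 2 * frobNorm (A - C) := by
  have hτ : √(1 - 1 / n) ≤ 1 := Real.sqrt_le_one.2 (sub_le_self _ (by positivity))
  have hBA : frobNorm (B - A) ≤ frobNorm (B - C) + frobNorm (A - C) := by
    simpa only [frobNorm_sub_rev C A] using frobNorm_sub_le B C A
  calc frobNorm (broyd B A (Pi.single i 1) - C)
      ≤ frobNorm (broyd B A (Pi.single i 1) - A) + frobNorm (A - C) := frobNorm_sub_le _ _ _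
    _ ≤ √(1 - 1 / n) * (frobNorm (B - C) + frobNorm (A - C)) + frobNorm (A - C) := by
        gcongr
        exact (frobNorm_broyd_single_sub_le hi).trans (by gcongr)
    _ ≤ √(1 - 1 / n) * frobNorm (B - C) + 2 * frobNorm (A - C) := by
        nlinarith [frobNorm_nonneg (A - C)]

end GreedyUpdate

theorem norm_image_sub_sub_fderiv_le {E F : Type*} [NormedAddCommGroup E] [NormedSpace ℝ E]
    [NormedAddCommGroup F] [NormedSpace ℝ F] {f : E → F} {f' : E → E →L[ℝ] F} {a b : E} {L : ℝ}
    (hf : ∀ z ∈ segment ℝ a b, HasFDerivAt f (f' z) z) (hL : 0 ≤ L)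
    (hf' : ∀ z ∈ segment ℝ a b, ‖f' z - f' a‖ ≤ L * ‖z - a‖) :
    ‖f b - f a - f' a (b - a)‖ ≤ L * ‖b - a‖ ^ 2 := by
  have hbound : ∀ z ∈ segment ℝ a b, ‖f' z - f' a‖ ≤ L * ‖b - a‖ := by
    intro z hz
    obtain ⟨t, ⟨ht0, ht1⟩, rfl⟩ := (segment_eq_image' ℝ a b ▸ hz : _)
    refine (hf' _ hz).trans (mul_le_mul_of_nonneg_left ?_ hL)
    rw [add_sub_cancel_left, norm_smul, Real.norm_of_nonneg ht0]
    exact mul_le_of_le_one_left (norm_nonneg _) ht1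
  have := (convex_segment a b).norm_image_sub_le_of_norm_hasFDerivWithin_le'
    (fun z hz => (hf z hz).hasFDerivWithinAt) hbound (left_mem_segment ℝ a b)
    (right_mem_segment ℝ a b)
  rwa [mul_assoc, ← sq] at this

lemma vecNorm_sub_sub_mulVec_le {n : ℕ} {F : (Fin n → ℝ) → (Fin n → ℝ)}
    {J : (Fin n → ℝ) → Matrix (Fin n) (Fin n) ℝ} (hF : ∀ x, HasFDerivAt F (matCLM (J x)) x)
    {xs : Fin n → ℝ} {M : ℝ} (hM : 0 ≤ M)
    (hLip : ∀ x, specNorm (J x - J xs) ≤ M * vecNorm (x - xs)) (x : Fin n → ℝ) :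
    vecNorm (F x - F xs - J xs *ᵥ (x - xs)) ≤ M * vecNorm (x - xs) ^ 2 := by
  let e := EuclideanSpace.equiv (Fin n) ℝ
  have hG (y : EuclideanSpace ℝ (Fin n)) :
      HasFDerivAt (fun y => toLp 2 (F (ofLp y))) (toEuclideanCLM (𝕜 := ℝ) (J (ofLp y))) y :=
    e.symm.hasFDerivAt.comp y ((hF _).comp y e.hasFDerivAt)
  have := norm_image_sub_sub_fderiv_le (a := toLp 2 xs) (b := toLp 2 x) (fun z _ => hG z) hM
    fun z _ => by
      simpa [← map_sub, ← specNorm_eq_norm_toEuclideanCLM, vecNorm_eq_norm] using hLip (ofLp z)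
  simpa [vecNorm_eq_norm, mulVec_sub] using this

lemma vecNorm_quasiNewton_step_sub_le {n : ℕ} {B Js : Matrix (Fin n) (Fin n) ℝ}
    (hB : IsUnit B) (hJs : IsUnit Js) (x xs v : Fin n → ℝ) :
    (1 - specNorm Js⁻¹ * frobNorm (B - Js)) * vecNorm (x - B⁻¹ *ᵥ v - xs)
      ≤ specNorm Js⁻¹
        * (frobNorm (B - Js) * vecNorm (x - xs) + vecNorm (v - Js *ᵥ (x - xs))) := by
  set e := x - B⁻¹ *ᵥ v - xs
  have hBe_eq : B *ᵥ e = (B - Js) *ᵥ (x - xs) - (v - Js *ᵥ (x - xs)) := by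
    simp only [e, mulVec_sub, sub_mulVec, mulVec_mulVec,
      mul_nonsing_inv _ ((isUnit_iff_isUnit_det B).1 hB), one_mulVec]
    abel
  have hJe : vecNorm e ≤ specNorm Js⁻¹ * vecNorm (Js *ᵥ e) := by
    simpa [mulVec_mulVec, nonsing_inv_mul _ ((isUnit_iff_isUnit_det Js).1 hJs)] using
      vecNorm_mulVec_le_specNorm Js⁻¹ (Js *ᵥ e)
  have hJB : vecNorm (Js *ᵥ e) ≤ vecNorm (B *ᵥ e) + frobNorm (B - Js) * vecNorm e := by
    simpa [sub_mulVec] using (vecNorm_sub_le (B *ᵥ e) ((B - Js) *ᵥ e)).trans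
      (by gcongr; exact vecNorm_mulVec_le_frobNorm _ _)
  have hBe : vecNorm (B *ᵥ e)
      ≤ frobNorm (B - Js) * vecNorm (x - xs) + vecNorm (v - Js *ᵥ (x - xs)) := by
    rw [hBe_eq]
    exact (vecNorm_sub_le _ _).trans (by gcongr; exact vecNorm_mulVec_le_frobNorm _ _)
  have hc := specNorm_nonneg Js⁻¹
  nlinarith [mul_le_mul_of_nonneg_left hJB hc, mul_le_mul_of_nonneg_left hBe hc]

structure BroydenErrorRecursion (c M q τ : ℝ) (r σ : ℕ → ℝ) : Prop where
  c_nonneg : 0 ≤ c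
  M_nonneg : 0 ≤ M
  one_le_q : 1 ≤ q
  two_thirds_le_τ : 2 / 3 ≤ τ
  τ_le_one : τ ≤ 1
  r_nonneg : ∀ k, 0 ≤ r k
  σ_nonneg : ∀ k, 0 ≤ σ k
  error_succ : ∀ k, (1 - c * σ k) * r (k + 1) ≤ c * (σ k * r k + M * r k ^ 2)
  deviation_succ : ∀ k, σ (k + 1) ≤ τ * σ k + 2 * q * M * r (k + 1)

namespace BroydenErrorRecursion

-- The factor `6` makes `8 r (k+1) ≤ 4 r k ≤ 6 τ r k` work, using `r (k+1) ≤ r k / 2` and `τ ≥ 2/3`.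
def potential (c M q : ℝ) (r σ : ℕ → ℝ) (k : ℕ) : ℝ := c * σ k + 6 * q * c * M * r k

variable {c M q τ : ℝ} {r σ : ℕ → ℝ} (h : BroydenErrorRecursion c M q τ r σ)
include h

lemma r_succ_le {k : ℕ} (hk : potential c M q r σ k ≤ 1 / 3) :
    r (k + 1) ≤ 3 / 2 * potential c M q r σ k * r k := by
  have hcM : 0 ≤ c * M := mul_nonneg h.c_nonneg h.M_nonneg
  have hcσ : c * σ k ≤ 1 / 3 := by
    unfold potential at hk
    nlinarith [mul_nonneg (mul_nonneg hcM (h.r_nonneg k)) (zero_le_one.trans h.one_le_q)]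
  have hrhs : c * (σ k * r k + M * r k ^ 2) ≤ potential c M q r σ k * r k := by
    unfold potential
    nlinarith [mul_nonneg (mul_nonneg hcM (sq_nonneg (r k))) (sub_nonneg.2 h.one_le_q)]
  nlinarith [h.error_succ k, h.r_nonneg (k + 1)]

lemma potential_succ_le {k : ℕ} (hk : potential c M q r σ k ≤ 1 / 3) :
    potential c M q r σ (k + 1) ≤ τ * potential c M q r σ k := by
  have hp : 0 ≤ q * c * M :=
    mul_nonneg (mul_nonneg (zero_le_one.trans h.one_le_q) h.c_nonneg) h.M_nonneg
  have hhalf : r (k + 1) ≤ r k / 2 := by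
    nlinarith [h.r_succ_le hk, h.r_nonneg k]
  have hσ := mul_le_mul_of_nonneg_left (h.deviation_succ k) h.c_nonneg
  unfold potential
  nlinarith [mul_le_mul_of_nonneg_left hhalf hp, mul_nonneg hp (h.r_nonneg k),
    h.two_thirds_le_τ]

lemma potential_le (h0 : potential c M q r σ 0 ≤ 1 / 3) (k : ℕ) :
    potential c M q r σ k ≤ τ ^ k / 3 := by
  have hτ : 0 ≤ τ := by linarith [h.two_thirds_le_τ]
  induction k with
  | zero => simpa using h0
  | succ k ih =>
    have hk : potential c M q r σ k ≤ 1 / 3 :=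
      ih.trans (by gcongr; exact pow_le_one₀ hτ h.τ_le_one)
    calc potential c M q r σ (k + 1) ≤ τ * potential c M q r σ k := h.potential_succ_le hk
      _ ≤ τ * (τ ^ k / 3) := by gcongr
      _ = τ ^ (k + 1) / 3 := by ring

lemma r_succ_le_pow (h0 : potential c M q r σ 0 ≤ 1 / 3) (k : ℕ) :
    r (k + 1) ≤ τ ^ k * r k := by
  have hτ : 0 ≤ τ := by linarith [h.two_thirds_le_τ]
  have hpk := h.potential_le h0 k
  have hk : potential c M q r σ k ≤ 1 / 3 :=
    hpk.trans (by gcongr; exact pow_le_one₀ hτ h.τ_le_one)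
  calc r (k + 1) ≤ 3 / 2 * potential c M q r σ k * r k := h.r_succ_le hk
    _ ≤ 3 / 2 * (τ ^ k / 3) * r k := by gcongr; exact h.r_nonneg k
    _ ≤ τ ^ k * r k := by nlinarith [pow_nonneg hτ k, h.r_nonneg k]

lemma r_le_pow_choose_two (h0 : potential c M q r σ 0 ≤ 1 / 3) (k : ℕ) :
    r k ≤ τ ^ k.choose 2 * r 0 := by
  have hτ : 0 ≤ τ := by linarith [h.two_thirds_le_τ]
  induction k with
  | zero => simp
  | succ k ih =>
    calc r (k + 1) ≤ τ ^ k * r k := h.r_succ_le_pow h0 k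
      _ ≤ τ ^ k * (τ ^ k.choose 2 * r 0) := by gcongr
      _ = τ ^ (k + 1).choose 2 * r 0 := by
          rw [Nat.choose_succ_succ, Nat.choose_one_right, pow_add]; ring

end BroydenErrorRecursion

lemma sqrt_pow_choose_two {a : ℝ} (ha : 0 ≤ a) (k : ℕ) :
    √a ^ k.choose 2 = a ^ ((k : ℝ) * (k - 1) / 4) := by
  rw [Real.sqrt_eq_rpow, ← Real.rpow_natCast, ← Real.rpow_mul ha, Nat.cast_choose_two]
  ring_nf

theorem greedy_broyden_superlinear {n : ℕ} (hn : 2 ≤ n)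
    (F : (Fin n → ℝ) → (Fin n → ℝ))
    (J : (Fin n → ℝ) → Matrix (Fin n) (Fin n) ℝ)
    (hF : ∀ x, HasFDerivAt F (matCLM (J x)) x)
    (xs : Fin n → ℝ) (hxs : F xs = 0) (hJs : IsUnit (J xs))
    (c : ℝ) (hc : c = specNorm (J xs)⁻¹)
    (M : ℝ) (hM : 0 < M)
    (hLip : ∀ x, specNorm (J x - J xs) ≤ M * vecNorm (x - xs))
    (x : ℕ → (Fin n → ℝ)) (B : ℕ → Matrix (Fin n) (Fin n) ℝ) (idx : ℕ → Fin n)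
    (hBinv : ∀ k, IsUnit (B k))
    (hxrec : ∀ k, x (k + 1) = x k - (B k)⁻¹.mulVec (F (x k)))
    (hgreedy : ∀ k, ∀ i : Fin n,
      vecNorm ((B k - J (x (k + 1))).mulVec (Pi.single i 1))
        ≤ vecNorm ((B k - J (x (k + 1))).mulVec (Pi.single (idx k) 1)))
    (hBrec : ∀ k, B (k + 1) = broyd (B k) (J (x (k + 1))) (Pi.single (idx k) 1))
    (hinit : 48 * Real.sqrt n * c * M * vecNorm (x 0 - xs)
      + c * frobNorm (B 0 - J (x 0)) ≤ 1 / 3) :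
    ∀ k : ℕ, 1 ≤ k →
      vecNorm (x k - xs)
        ≤ Real.exp k * (1 - 1 / (n : ℝ)) ^ ((k : ℝ) * ((k : ℝ) - 1) / 4)
          * vecNorm (x 0 - xs) := by
  have hn' : (2 : ℝ) ≤ n := by exact_mod_cast hn
  have hn_inv : 1 / (n : ℝ) ≤ 1 / 2 := one_div_le_one_div_of_le (by norm_num) hn'
  have hc0 : 0 ≤ c := hc ▸ specNorm_nonneg _
  have hJ (y : Fin n → ℝ) : frobNorm (J y - J xs) ≤ √n * (M * vecNorm (y - xs)) :=
    (frobNorm_le_sqrt_mul_specNorm _).trans (by gcongr; exact hLip y)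
  have hrec : BroydenErrorRecursion c M √n √(1 - 1 / n) (fun k => vecNorm (x k - xs))
      (fun k => frobNorm (B k - J xs)) :=
    { c_nonneg := hc0
      M_nonneg := hM.le
      one_le_q := Real.one_le_sqrt.2 (by linarith)
      two_thirds_le_τ := by
        rw [Real.le_sqrt' (by norm_num)]
        linarith
      τ_le_one := Real.sqrt_le_one.2 (sub_le_self _ (by positivity))
      r_nonneg := fun _ => vecNorm_nonneg _
      σ_nonneg := fun _ => frobNorm_nonneg _
      error_succ := fun k => by
        rw [hxrec k, hc]
        refine (vecNorm_quasiNewton_step_sub_le (hBinv k) hJs _ _ _).trans ?_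
        gcongr
        · exact specNorm_nonneg _
        · simpa [hxs] using vecNorm_sub_sub_mulVec_le hF hM.le hLip (x k)
      deviation_succ := fun k => by
        rw [hBrec k]
        linarith [frobNorm_broyd_single_sub_le_add (hgreedy k) (J xs), hJ (x (k + 1))] }
  have h0 : BroydenErrorRecursion.potential c M √n (fun k => vecNorm (x k - xs))
      (fun k => frobNorm (B k - J xs)) 0 ≤ 1 / 3 := by
    have hσ0 : frobNorm (B 0 - J xs)
        ≤ frobNorm (B 0 - J (x 0)) + √n * (M * vecNorm (x 0 - xs)) := by
      linarith [frobNorm_sub_le (B 0) (J (x 0)) (J xs), hJ (x 0)]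
    have hr0 : 0 ≤ √n * c * M * vecNorm (x 0 - xs) := by
      have := vecNorm_nonneg (x 0 - xs); positivity
    unfold BroydenErrorRecursion.potential
    nlinarith [mul_le_mul_of_nonneg_left hσ0 hc0]
  intro k _
  calc vecNorm (x k - xs) ≤ √(1 - 1 / n) ^ k.choose 2 * vecNorm (x 0 - xs) :=
        hrec.r_le_pow_choose_two h0 k
    _ = (1 - 1 / (n : ℝ)) ^ ((k : ℝ) * ((k : ℝ) - 1) / 4) * vecNorm (x 0 - xs) := by
        rw [sqrt_pow_choose_two (by linarith)]
    _ ≤ _ := by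
        rw [mul_assoc]
        exact le_mul_of_one_le_left
          (mul_nonneg (Real.rpow_nonneg (by linarith) _) (vecNorm_nonneg _))
          (Real.one_le_exp (Nat.cast_nonneg k))
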